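/- arXiv:2402.07798 — 2 statements merged into one kernel-verified Lean document; each statement's English description precedes it below -/
import Mathlib

section
/- Let n ≥ 2 and let r = [r_1, …, r_{2n−2}] be a tree-like factorization of λ_n. Then there exist integers a_0 < a_1 < ⋯ < a_{2n−2} with r_ℓ = ((a_{ℓ−1}, a_ℓ)) for all ℓ, and for any such integers one has a_0 ≡ 0 (mod n) and a_{2n−2} ≡ 0 (mod n). -/
/-- The affine reflection `((i,j))` of the affine symmetric group `W̃ₙ`, as a function
`ℤ → ℤ`: it interchanges `i + k*n` and `j + k*n` for every `k ∈ ℤ` and fixes all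
integers not congruent to `i` or `j` mod `n`. -/
def affRefl (n : ℕ) (i j : ℤ) : ℤ → ℤ := fun k =>
  if (k - i) % (n : ℤ) = 0 then k - i + j
  else if (k - j) % (n : ℤ) = 0 then k - j + i
  else k

/-- `t : ℤ → ℤ` is an affine reflection of `W̃ₙ`. -/
def IsAffRefl (n : ℕ) (t : ℤ → ℤ) : Prop :=
  ∃ i j : ℤ, (i - j) % (n : ℤ) ≠ 0 ∧ t = affRefl n i j

/-- The simple reflection `sⱼ = ((j, j+1))`. -/
def simpleRefl (n : ℕ) (j : ℤ) : ℤ → ℤ := affRefl n j (j + 1)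

/-- The translation `λₙ`: it sends `k ≡ 0 (mod n)` to `k - n(n-1)` and all other `k`
to `k + n`. -/
def lam (n : ℕ) : ℤ → ℤ := fun k =>
  if k % (n : ℤ) = 0 then k - (n : ℤ) * ((n : ℤ) - 1) else k + (n : ℤ)

/-- The product `r₁ r₂ ⋯ rₘ` of a list of elements, with `(w·v)(k) = w(v(k))`. -/
def listProd (l : List (ℤ → ℤ)) : ℤ → ℤ := l.foldr (· ∘ ·) id

/-- `l` is a factorization of `λₙ` into affine reflections. -/
def IsFactorization (n : ℕ) (l : List (ℤ → ℤ)) : Prop :=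
  (∀ t ∈ l, IsAffRefl n t) ∧ listProd l = lam n

/-- A tree-like factorization of `λₙ`: a factorization `[r₁, …, r_{2n-2}]` into `2n-2`
affine reflections such that there are integers `a₀, …, a_{2n-2}` and `b₁, …, b_{2n-2}`
with `r_k = ((a_{k-1}, b_k))`, `a_{k-1} < b_k` and `a_k ≡ b_k (mod n)`
(0-based: `r` at index `k` equals `((a k, b (k+1)))`). -/
def IsTreeLike (n : ℕ) (l : List (ℤ → ℤ)) : Prop :=
  IsFactorization n l ∧ l.length = 2 * n - 2 ∧
  ∃ a b : ℕ → ℤ, ∀ k : ℕ, ∀ h : k < l.length,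
    l.get ⟨k, h⟩ = affRefl n (a k) (b (k + 1)) ∧
    a k < b (k + 1) ∧ (a (k + 1) - b (k + 1)) % (n : ℤ) = 0

/-- `a₀ < a₁ < ⋯` is a strictly increasing endpoint sequence of the factorization `l`:
`r_ℓ = ((a_{ℓ-1}, a_ℓ))` (0-based: `r` at index `k` is `((a k, a (k+1)))`). -/
def EndSeq (n : ℕ) (l : List (ℤ → ℤ)) (a : ℕ → ℤ) : Prop :=
  ∀ k : ℕ, ∀ h : k < l.length,
    a k < a (k + 1) ∧ l.get ⟨k, h⟩ = affRefl n (a k) (a (k + 1))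

/-- The representative of `x` modulo `n` lying in `{1, …, n}`. -/
def resOne (n : ℕ) (x : ℤ) : ℤ := if x % (n : ℤ) = 0 then (n : ℤ) else x % (n : ℤ)

/-- `nb_k(r)` for the endpoint sequence `a` of a tree-like factorization of `λₙ`:
the list of the residues `a_i mod n` (representatives in `{1, …, n}`), in increasing
order of the index `i ∈ {1, …, 2n-2}`, over those `i` with `a_{i-1} ≡ k (mod n)`
(0-based: indices `i < 2n-2` with `a i ≡ k`, recording the residue of `a (i+1)`). -/
def nb (n : ℕ) (a : ℕ → ℤ) (k : ℤ) : List ℤ :=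
  ((List.range (2 * n - 2)).filter (fun i => decide ((a i - k) % (n : ℤ) = 0))).map
    (fun i => resOne n (a (i + 1)))

/-- A cyclic factorization of `λₙ`: a tree-like factorization such that, for an
endpoint sequence `a` as above, (i) `nb_n` is strictly increasing; and (ii) for each
`k ∈ {1, …, n-1}`, writing `nb_k = [c₁, …, c_ℓ]`, there is `j ∈ {1, …, ℓ}` with
`c_j < c_{j+1} < ⋯ < c_{ℓ-1} < k < c₁ < ⋯ < c_{j-1}`. -/
def IsCyclicFact (n : ℕ) (l : List (ℤ → ℤ)) : Prop :=
  IsTreeLike n l ∧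
  ∃ a : ℕ → ℤ, EndSeq n l a ∧
    List.Chain' (· < ·) (nb n a (n : ℤ)) ∧
    (∀ k : ℤ, 1 ≤ k → k ≤ (n : ℤ) - 1 →
      ∃ m : ℕ, m < (nb n a k).length ∧
        List.Chain' (· < ·)
          ((nb n a k).dropLast.drop m ++ k :: (nb n a k).dropLast.take m))

/-- The letter at (0-based) position `j` of the subword of `λ̂ₙ` with skip set `S`:
the identity `e` if `j` is a skip, and the simple reflection `sⱼ` otherwise. -/
def letterAt (n : ℕ) (S : Finset ℕ) (j : ℕ) : ℤ → ℤ :=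
  if j ∈ S then id else simpleRefl n (j : ℤ)

/-- The subword of the word `λ̂ₙ = [s₀, s₁, …, s_{n-1}]^{n-1}` (of length `N = n(n-1)`,
whose letter at 0-based position `j` is `s_j`) with skip set `S`. -/
def subword (n : ℕ) (S : Finset ℕ) : List (ℤ → ℤ) :=
  (List.range (n * (n - 1))).map (letterAt n S)

/-- `u_{(j)}`: the product of the first `j` letters of the subword. -/
def uPref (n : ℕ) (S : Finset ℕ) (j : ℕ) : ℤ → ℤ :=
  listProd ((subword n S).take j)

/-- `u_{(j)}⁻¹`: since every letter is an involution, the inverse of `u_{(j)}` is the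
product of the first `j` letters in reverse order. -/
def uPrefInv (n : ℕ) (S : Finset ℕ) (j : ℕ) : ℤ → ℤ :=
  listProd (((subword n S).take j).reverse)

/-- The element `t_{j+1} = u_{(j)} s_j u_{(j)}⁻¹` of `inv(u)` (0-based `j`). -/
def conjAt (n : ℕ) (S : Finset ℕ) (j : ℕ) : ℤ → ℤ :=
  uPref n S j ∘ simpleRefl n (j : ℤ) ∘ uPrefInv n S j

/-- The (0-based) skip indices of the subword, in increasing order. -/
def skipIdx (S : Finset ℕ) : List ℕ := S.sort (· ≤ ·)

/-- The sequence `r^u` of skip reflections of the subword with skip set `S`. -/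
def skipRefls (n : ℕ) (S : Finset ℕ) : List (ℤ → ℤ) :=
  (skipIdx S).map (conjAt n S)

/-- The subword with skip set `S` is a member of `S_n`: it is a subword of `λ̂ₙ`
with exactly `2n-2` skips whose product is the identity. -/
def SnMem (n : ℕ) (S : Finset ℕ) : Prop :=
  S ⊆ Finset.range (n * (n - 1)) ∧ S.card = 2 * n - 2 ∧ listProd (subword n S) = id

/-- The product of the suffix `r_{i+1} ⋯ r_m` (0-based: drops the first `i` factors). -/
def suffixProd (l : List (ℤ → ℤ)) (i : ℕ) : ℤ → ℤ := listProd (l.drop i)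

/-- The cyclic segment product `u_{a+1} u_{a+2} ⋯ u_{a+L}` of the subword with skip set
`S` (0-based starting position `a`, indices taken modulo `N = n(n-1)`). -/
def segProd (n : ℕ) (S : Finset ℕ) (a L : ℕ) : ℤ → ℤ :=
  listProd ((List.range L).map (fun t => letterAt n S ((a + t) % (n * (n - 1)))))

/-! Each factor `((a_{k-1}, a_k))` of a factorization with increasing endpoints sends `a_k` to
`a_{k-1}`, so `λₙ` sends `a_{2n-2}` down to `a₀ ≤ a_{2n-2}`. Since `λₙ` moves every integer
`≢ 0 (mod n)` up by `n`, this forces `a_{2n-2} ≡ 0`, and then `a₀ = a_{2n-2} - n(n-1) ≡ 0`.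
Endpoint sequences exist because `((a, b)) = ((a + c, b + c))` whenever `n ∣ c`, which lets one
translate each pair `(a_{k-1}, b_k)` so that consecutive pairs share an endpoint. -/

lemma emod_sub_eq_zero_iff_intCast_eq {n : ℕ} {x y : ℤ} :
    (x - y) % (n : ℤ) = 0 ↔ (x : ZMod n) = y := by
  rw [← Int.dvd_iff_emod_eq_zero, ← ZMod.intCast_zmod_eq_zero_iff_dvd, Int.cast_sub, sub_eq_zero]

section affRefl

variable {n : ℕ} {i j x : ℤ}

lemma affRefl_add_of_intCast_eq_zero {c : ℤ} (hc : (c : ZMod n) = 0) (i j : ℤ) :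
    affRefl n (i + c) (j + c) = affRefl n i j := by
  funext x
  simp only [affRefl, emod_sub_eq_zero_iff_intCast_eq, Int.cast_add, hc, add_zero]
  split_ifs <;> ring

lemma affRefl_apply_of_intCast_eq_left (hx : (x : ZMod n) = i) : affRefl n i j x = x - i + j := by
  simp only [affRefl, emod_sub_eq_zero_iff_intCast_eq, hx, if_true]

lemma affRefl_apply_of_intCast_eq_right (hi : (x : ZMod n) ≠ i) (hx : (x : ZMod n) = j) :
    affRefl n i j x = x - j + i := by
  simp only [affRefl, emod_sub_eq_zero_iff_intCast_eq]
  rw [if_neg hi, if_pos hx]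

lemma affRefl_apply_of_intCast_ne (hi : (x : ZMod n) ≠ i) (hj : (x : ZMod n) ≠ j) :
    affRefl n i j x = x := by
  simp only [affRefl, emod_sub_eq_zero_iff_intCast_eq, hi, hj, if_false]

lemma affRefl_apply_left : affRefl n i j i = j := by
  rw [affRefl_apply_of_intCast_eq_left rfl, sub_self, zero_add]

lemma affRefl_apply_right (h : (j : ZMod n) ≠ i) : affRefl n i j j = i := by
  rw [affRefl_apply_of_intCast_eq_right h rfl, sub_self, zero_add]

lemma affRefl_involutive (h : (i - j) % (n : ℤ) ≠ 0) : Function.Involutive (affRefl n i j) := by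
  rw [Ne, emod_sub_eq_zero_iff_intCast_eq] at h
  intro x
  by_cases hi : (x : ZMod n) = i
  · have hj : ((x - i + j : ℤ) : ZMod n) ≠ i := by simpa [hi] using Ne.symm h
    rw [affRefl_apply_of_intCast_eq_left hi, affRefl_apply_of_intCast_eq_right hj (by simp [hi])]
    ring
  by_cases hj : (x : ZMod n) = j
  · rw [affRefl_apply_of_intCast_eq_right hi hj, affRefl_apply_of_intCast_eq_left (by simp [hj])]
    ring
  rw [affRefl_apply_of_intCast_ne hi hj, affRefl_apply_of_intCast_ne hi hj]

/-- A genuine affine reflection is an involution, whereas `((p, q))` with `p ≡ q` translates the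
class of `p` by `q - p`. -/
lemma intCast_ne_of_isAffRefl (hij : i ≠ j) (h : IsAffRefl n (affRefl n i j)) :
    (j : ZMod n) ≠ i := by
  intro hc
  obtain ⟨p, q, hpq, he⟩ := h
  have hinv := (he ▸ affRefl_involutive hpq : Function.Involutive (affRefl n i j)) i
  rw [affRefl_apply_left, affRefl_apply_of_intCast_eq_left hc] at hinv
  omega

end affRefl

lemma listProd_apply_eq_of_forall_getElem_apply {l : List (ℤ → ℤ)} {a : ℕ → ℤ}
    (h : ∀ k (hk : k < l.length), l[k] (a (k + 1)) = a k) : listProd l (a l.length) = a 0 := by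
  induction l generalizing a with
  | nil => rfl
  | cons f l ih =>
    have hl : listProd l (a (l.length + 1)) = a 1 :=
      ih (a := fun k => a (k + 1)) fun k hk => h (k + 1) (by simpa using hk)
    change f (listProd l (a (l.length + 1))) = a 0
    rw [hl]
    exact h 0 (by simp)

namespace EndSeq

variable {n : ℕ} {l : List (ℤ → ℤ)} {a : ℕ → ℤ}

lemma listProd_apply (hl : ∀ t ∈ l, IsAffRefl n t) (ha : EndSeq n l a) :
    listProd l (a l.length) = a 0 := by
  refine listProd_apply_eq_of_forall_getElem_apply fun k hk => ?_
  obtain ⟨hlt, hk_eq⟩ := ha k hk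
  rw [List.get_eq_getElem] at hk_eq
  have hrefl := hk_eq ▸ hl _ (l.getElem_mem hk)
  rw [hk_eq]
  exact affRefl_apply_right (intCast_ne_of_isAffRefl hlt.ne hrefl)

lemma apply_zero_le (ha : EndSeq n l a) : ∀ j ≤ l.length, a 0 ≤ a j
  | 0, _ => le_rfl
  | j + 1, hj => (ha.apply_zero_le j (by omega)).trans (ha j hj).1.le

end EndSeq

lemma emod_eq_zero_of_lam_apply_le {n : ℕ} (hn : 0 < n) {x : ℤ} (h : lam n x ≤ x) :
    lam n x % (n : ℤ) = 0 ∧ x % (n : ℤ) = 0 := by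
  by_cases hx : x % (n : ℤ) = 0
  · refine ⟨?_, hx⟩
    rw [lam, if_pos hx, Int.sub_emod, hx, Int.mul_emod_right]
    rfl
  · rw [lam, if_neg hx] at h
    omega

lemma exists_endSeq {n : ℕ} {l : List (ℤ → ℤ)} {a b : ℕ → ℤ}
    (h : ∀ k (hk : k < l.length), l.get ⟨k, hk⟩ = affRefl n (a k) (b (k + 1)) ∧
      a k < b (k + 1) ∧ (a (k + 1) - b (k + 1)) % (n : ℤ) = 0) :
    ∃ c, EndSeq n l c := by
  let c : ℕ → ℤ := fun k => a 0 + ∑ i ∈ Finset.range k, (b (i + 1) - a i)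
  have hc_succ (k : ℕ) : c (k + 1) = c k + (b (k + 1) - a k) := by
    simp only [c, Finset.sum_range_succ]
    ring
  have hc_cast (k : ℕ) (hk : k ≤ l.length) : (c k : ZMod n) = a k := by
    induction k with
    | zero => simp [c]
    | succ k ih =>
      have hb : (a (k + 1) : ZMod n) = b (k + 1) :=
        emod_sub_eq_zero_iff_intCast_eq.1 (h k (by omega)).2.2
      rw [hc_succ, hb, Int.cast_add, ih (by omega), Int.cast_sub, add_sub_cancel]
  refine ⟨c, fun k hk => ?_⟩
  obtain ⟨hget, hlt, -⟩ := h k hk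
  have hshift : ((c k - a k : ℤ) : ZMod n) = 0 := by
    rw [Int.cast_sub, hc_cast k hk.le, sub_self]
  refine ⟨by rw [hc_succ]; omega, ?_⟩
  rw [hget, hc_succ, ← affRefl_add_of_intCast_eq_zero hshift, add_sub_cancel]
  congr 1
  ring

/-- Every tree-like factorization of `λₙ` has a strictly increasing
endpoint sequence `a₀ < a₁ < ⋯ < a_{2n-2}` with `r_ℓ = ((a_{ℓ-1}, a_ℓ))`, and for any
such sequence `a₀ ≡ 0 (mod n)` and `a_{2n-2} ≡ 0 (mod n)`. -/
theorem stmt3 (n : ℕ) (hn : 2 ≤ n) (l : List (ℤ → ℤ)) (h : IsTreeLike n l) :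
    (∃ a : ℕ → ℤ, EndSeq n l a) ∧
    (∀ a : ℕ → ℤ, EndSeq n l a →
      a 0 % (n : ℤ) = 0 ∧ a l.length % (n : ℤ) = 0) := by
  obtain ⟨⟨hrefl, hprod⟩, -, a, b, hab⟩ := h
  refine ⟨exists_endSeq hab, fun c hc => ?_⟩
  have hlam : lam n (c l.length) = c 0 := hprod ▸ hc.listProd_apply hrefl
  have hle : lam n (c l.length) ≤ c l.length := hlam ▸ hc.apply_zero_le _ le_rfl
  rw [← hlam]
  exact emod_eq_zero_of_lam_apply_le (by omega) hle
end

section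
/- Let n ≥ 2, let r = [r_1, …, r_{2n−2}] be a tree-like factorization of λ_n, and let k ∈ {1, …, n−1}. Say that r_ℓ increases k if r_ℓ r_{ℓ+1} ⋯ r_{2n−2}(k) > r_{ℓ+1} ⋯ r_{2n−2}(k). Then there are exactly two indices ℓ ∈ {1, …, 2n−2} such that r_ℓ increases k. -/
/-!
Shifting the endpoints by multiples of `n` writes `r_ℓ = ((A_{ℓ-1}, A_ℓ))` with
`A_0 < A_1 < ⋯ < A_{2n-2}`. Followed backwards through the factors, `A_{2n-2}` is carried to
`A_0`, so `λₙ` does not move it up and `A_{2n-2} ≡ 0`. Each suffix product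
`r_{ℓ+1} ⋯ r_{2n-2}` permutes the residue classes and carries the class `0` to that of `A_ℓ`.
Hence, on a point of nonzero class, `r_ℓ` either acts trivially or, when the point is
`≡ A_{ℓ-1}`, increases it by `A_ℓ - A_{ℓ-1} ≢ 0 (mod n)`; and every factor increases exactly one
of the `n - 1` nonzero classes. The increases along the orbit of `k` add up to `λₙ(k) - k = n`,
so there are at least two of them, and as the `2n - 2` factors are shared among `n - 1`
classes, there are exactly two for each class.
-/

open Finset Function

section

variable {n : ℕ}

theorem sub_emod_eq_zero_iff_modEq {x p : ℤ} : (x - p) % (n : ℤ) = 0 ↔ x ≡ p [ZMOD n] := by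
  rw [← Int.dvd_iff_emod_eq_zero, ← Int.modEq_iff_dvd, Int.modEq_comm]

section affRefl

variable {p q x : ℤ}

theorem affRefl_apply_of_modEq_left (h : x ≡ p [ZMOD n]) : affRefl n p q x = x - p + q := by
  rw [affRefl, if_pos (sub_emod_eq_zero_iff_modEq.2 h)]

theorem affRefl_apply_of_modEq_right (hp : ¬ x ≡ p [ZMOD n]) (hq : x ≡ q [ZMOD n]) :
    affRefl n p q x = x - q + p := by
  rw [affRefl, if_neg (mt sub_emod_eq_zero_iff_modEq.1 hp),
    if_pos (sub_emod_eq_zero_iff_modEq.2 hq)]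

theorem affRefl_apply_of_not_modEq (hp : ¬ x ≡ p [ZMOD n]) (hq : ¬ x ≡ q [ZMOD n]) :
    affRefl n p q x = x := by
  rw [affRefl, if_neg (mt sub_emod_eq_zero_iff_modEq.1 hp),
    if_neg (mt sub_emod_eq_zero_iff_modEq.1 hq)]

theorem affRefl_add_mul (i j t : ℤ) : affRefl n (i + t * n) (j + t * n) = affRefl n i j := by
  funext x
  have hi : x ≡ i + t * n [ZMOD n] ↔ x ≡ i [ZMOD n] := Int.modEq_add_mul_modulus_iff
  have hj : x ≡ j + t * n [ZMOD n] ↔ x ≡ j [ZMOD n] := Int.modEq_add_mul_modulus_iff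
  by_cases h₁ : x ≡ i [ZMOD n]
  · rw [affRefl_apply_of_modEq_left (hi.2 h₁), affRefl_apply_of_modEq_left h₁]
    ring
  by_cases h₂ : x ≡ j [ZMOD n]
  · rw [affRefl_apply_of_modEq_right (mt hi.1 h₁) (hj.2 h₂), affRefl_apply_of_modEq_right h₁ h₂]
    ring
  rw [affRefl_apply_of_not_modEq (mt hi.1 h₁) (mt hj.1 h₂), affRefl_apply_of_not_modEq h₁ h₂]

theorem affRefl_modEq {y z : ℤ} (h : y ≡ z [ZMOD n]) :
    affRefl n p q y ≡ affRefl n p q z [ZMOD n] := by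
  by_cases h₁ : y ≡ p [ZMOD n]
  · rw [affRefl_apply_of_modEq_left h₁, affRefl_apply_of_modEq_left (h.symm.trans h₁)]
    exact (h.sub_right p).add_right q
  have h₁' : ¬ z ≡ p [ZMOD n] := fun h' => h₁ (h.trans h')
  by_cases h₂ : y ≡ q [ZMOD n]
  · rw [affRefl_apply_of_modEq_right h₁ h₂, affRefl_apply_of_modEq_right h₁' (h.symm.trans h₂)]
    exact (h.sub_right q).add_right p
  have h₂' : ¬ z ≡ q [ZMOD n] := fun h' => h₂ (h.trans h')
  rwa [affRefl_apply_of_not_modEq h₁ h₂, affRefl_apply_of_not_modEq h₁' h₂']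

theorem affRefl_involutive_s4 (hpq : ¬ p ≡ q [ZMOD n]) : Involutive (affRefl n p q) := by
  intro x
  by_cases h₁ : x ≡ p [ZMOD n]
  · have hq : x - p + q ≡ q [ZMOD n] := by simpa using (h₁.sub_right p).add_right q
    rw [affRefl_apply_of_modEq_left h₁,
      affRefl_apply_of_modEq_right (fun h => hpq (h.symm.trans hq)) hq]
    ring
  by_cases h₂ : x ≡ q [ZMOD n]
  · have hp : x - q + p ≡ p [ZMOD n] := by simpa using (h₂.sub_right q).add_right p
    rw [affRefl_apply_of_modEq_right h₁ h₂, affRefl_apply_of_modEq_left hp]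
    ring
  rw [affRefl_apply_of_not_modEq h₁ h₂, affRefl_apply_of_not_modEq h₁ h₂]

/-- For `p ≡ q` the map `affRefl n p q` translates the class of `p` by `q - p`, so it is not an
involution. -/
theorem not_modEq_of_isAffRefl (h : IsAffRefl n (affRefl n p q)) (hpq : p ≠ q) :
    ¬ p ≡ q [ZMOD n] := by
  intro hmod
  obtain ⟨i, j, hij, he⟩ := h
  have hinv : Involutive (affRefl n p q) :=
    he ▸ affRefl_involutive_s4 (mt sub_emod_eq_zero_iff_modEq.2 hij)
  have h₁ : affRefl n p q p = q := by
    rw [affRefl_apply_of_modEq_left Int.ModEq.rfl]; ring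
  have h₂ : affRefl n p q q = q - p + q := affRefl_apply_of_modEq_left hmod.symm
  have := hinv p
  rw [h₁, h₂] at this
  exact hpq (by linarith)

end affRefl

theorem IsAffRefl.involutive {t : ℤ → ℤ} (h : IsAffRefl n t) : Involutive t := by
  obtain ⟨i, j, hij, rfl⟩ := h
  exact affRefl_involutive_s4 (mt sub_emod_eq_zero_iff_modEq.2 hij)

theorem IsAffRefl.modEq {t : ℤ → ℤ} (h : IsAffRefl n t) {y z : ℤ} (hyz : y ≡ z [ZMOD n]) :
    t y ≡ t z [ZMOD n] := by
  obtain ⟨i, j, -, rfl⟩ := h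
  exact affRefl_modEq hyz

theorem listProd_cons (t : ℤ → ℤ) (L : List (ℤ → ℤ)) : listProd (t :: L) = t ∘ listProd L := rfl

theorem listProd_append (L M : List (ℤ → ℤ)) : listProd (L ++ M) = listProd L ∘ listProd M := by
  induction L with
  | nil => rfl
  | cons t L ih => rw [List.cons_append, listProd_cons, listProd_cons, ih, comp_assoc]

section listProd

variable {L : List (ℤ → ℤ)}

theorem listProd_reverse_apply_listProd (hL : ∀ t ∈ L, IsAffRefl n t) (x : ℤ) :
    listProd L.reverse (listProd L x) = x := by
  induction L generalizing x with
  | nil => rfl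
  | cons t L ih =>
    rw [List.reverse_cons, listProd_append]
    change listProd L.reverse (t (t (listProd L x))) = x
    rw [(hL t List.mem_cons_self).involutive]
    exact ih (fun s hs => hL s (List.mem_cons_of_mem t hs)) x

theorem listProd_modEq (hL : ∀ t ∈ L, IsAffRefl n t) {y z : ℤ} (h : y ≡ z [ZMOD n]) :
    listProd L y ≡ listProd L z [ZMOD n] := by
  induction L with
  | nil => exact h
  | cons t L ih =>
    exact (hL t List.mem_cons_self).modEq (ih fun s hs => hL s (List.mem_cons_of_mem t hs))

theorem listProd_modEq_iff (hL : ∀ t ∈ L, IsAffRefl n t) {y z : ℤ} :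
    listProd L y ≡ listProd L z [ZMOD n] ↔ y ≡ z [ZMOD n] := by
  refine ⟨fun h => ?_, listProd_modEq hL⟩
  have hL' : ∀ t ∈ L.reverse, IsAffRefl n t := fun t ht => hL t (List.mem_reverse.1 ht)
  simpa only [listProd_reverse_apply_listProd hL] using listProd_modEq hL' h

theorem listProd_surjective (hL : ∀ t ∈ L, IsAffRefl n t) : Surjective (listProd L) := by
  intro x
  refine ⟨listProd L.reverse x, ?_⟩
  have hL' : ∀ t ∈ L.reverse, IsAffRefl n t := fun t ht => hL t (List.mem_reverse.1 ht)
  simpa only [List.reverse_reverse] using listProd_reverse_apply_listProd hL' x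

end listProd

theorem card_filter_Ico_modEq_eq_one (hn : 0 < n) {f : ℤ → ℤ}
    (hf : ∀ y z, f y ≡ f z [ZMOD n] ↔ y ≡ z [ZMOD n]) (hsurj : Surjective f) {a : ℤ}
    (ha : ¬ f 0 ≡ a [ZMOD n]) : #{c ∈ Ico 1 (n : ℤ) | f c ≡ a [ZMOD n]} = 1 := by
  obtain ⟨y, rfl⟩ := hsurj a
  have hn' : (0 : ℤ) < n := by exact_mod_cast hn
  rw [card_eq_one]
  refine ⟨y % n, eq_singleton_iff_unique_mem.2 ⟨?_, ?_⟩⟩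
  · have hne : y % n ≠ 0 := fun h0 =>
      ha ((hf 0 y).2 (by rw [Int.ModEq, h0, Int.zero_emod]))
    refine mem_filter.2 ⟨mem_Ico.2 ⟨?_, Int.emod_lt_of_pos y hn'⟩, (hf _ _).2 (Int.mod_modEq y n)⟩
    have := Int.emod_nonneg y hn'.ne'
    omega
  · intro c hc
    obtain ⟨hc, hcy⟩ := mem_filter.1 hc
    obtain ⟨hc1, hcn⟩ := mem_Ico.1 hc
    rw [← (hf c y).1 hcy, Int.emod_eq_of_lt (by omega) hcn]

theorem two_le_card_of_sum_eq_of_not_dvd {ι : Type*} {s : Finset ι} {d : ι → ℤ} {m : ℤ}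
    (hm : m ≠ 0) (hd : ∀ i ∈ s, ¬ m ∣ d i) (hsum : ∑ i ∈ s, d i = m) : 2 ≤ #s := by
  by_contra! hs
  interval_cases h : #s
  · rw [card_eq_zero.1 h, sum_empty] at hsum
    exact hm hsum.symm
  · obtain ⟨i, rfl⟩ := card_eq_one.1 h
    rw [sum_singleton] at hsum
    exact hd i (mem_singleton_self i) (hsum ▸ dvd_rfl)

theorem lam_apply_of_not_modEq_zero {c : ℤ} (hc : ¬ c ≡ 0 [ZMOD n]) : lam n c = c + n := by
  rw [lam, if_neg fun h => hc (by rw [Int.ModEq, h, Int.zero_emod])]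

theorem not_modEq_zero_of_mem_Ico {c : ℤ} (hc : c ∈ Ico 1 (n : ℤ)) : ¬ c ≡ 0 [ZMOD n] := by
  obtain ⟨h1, hn⟩ := mem_Ico.1 hc
  rw [Int.modEq_zero_iff_dvd]
  intro hdvd
  linarith [Int.le_of_dvd (by omega) hdvd]

theorem suffixProd_zero (l : List (ℤ → ℤ)) : suffixProd l 0 = listProd l := rfl

theorem suffixProd_length (l : List (ℤ → ℤ)) : suffixProd l l.length = id := by
  rw [suffixProd, List.drop_length]
  rfl

theorem suffixProd_eq_comp (l : List (ℤ → ℤ)) {i : ℕ} (hi : i < l.length) :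
    suffixProd l i = l[i] ∘ suffixProd l (i + 1) := by
  rw [suffixProd, List.drop_eq_getElem_cons hi]
  rfl

theorem IsTreeLike.exists_endSeq {l : List (ℤ → ℤ)} (h : IsTreeLike n l) : ∃ A, EndSeq n l A := by
  obtain ⟨-, -, a, b, hab⟩ := h
  set S : ℕ → ℤ := fun i => ∑ j ∈ range i, (b (j + 1) - a (j + 1))
  refine ⟨fun i => a i + S i, fun i hi => ?_⟩
  have hS : S (i + 1) = S i + (b (i + 1) - a (i + 1)) := sum_range_succ _ _
  obtain ⟨t, ht⟩ : (n : ℤ) ∣ S i := dvd_sum fun j hj => by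
    rw [← dvd_neg, neg_sub, Int.dvd_iff_emod_eq_zero]
    exact (hab j (by have := mem_range.1 hj; omega)).2.2
  obtain ⟨hget, hlt, -⟩ := hab i hi
  refine ⟨by simp only [hS]; linarith, ?_⟩
  simp only [hS, ht]
  rw [hget, ← affRefl_add_mul (a i) (b (i + 1)) t]
  congr 1 <;> ring

namespace EndSeq

variable {l : List (ℤ → ℤ)} {A : ℕ → ℤ}

theorem not_modEq_succ (hA : EndSeq n l A) (hl : ∀ t ∈ l, IsAffRefl n t) {i : ℕ}
    (hi : i < l.length) : ¬ A i ≡ A (i + 1) [ZMOD n] :=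
  not_modEq_of_isAffRefl ((hA i hi).2 ▸ hl _ (List.get_mem l ⟨i, hi⟩)) (hA i hi).1.ne

theorem apply_zero_le_s4 (hA : EndSeq n l A) : A 0 ≤ A l.length := by
  suffices ∀ i ≤ l.length, A 0 ≤ A i from this _ le_rfl
  intro i hi
  induction i with
  | zero => rfl
  | succ i ih => exact (ih (by omega)).trans (hA i (by omega)).1.le

theorem suffixProd_apply_last (hA : EndSeq n l A) (hl : ∀ t ∈ l, IsAffRefl n t) {i : ℕ}
    (hi : i ≤ l.length) : suffixProd l i (A l.length) = A i := by
  induction hi using Nat.decreasingInduction with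
  | self => rw [suffixProd_length]; rfl
  | of_succ i hi ih =>
    rw [suffixProd_eq_comp l hi, comp_apply, ih, ← List.get_eq_getElem (i := ⟨i, hi⟩),
      (hA i hi).2, affRefl_apply_of_modEq_right (fun h => hA.not_modEq_succ hl hi h.symm)
        Int.ModEq.rfl]
    ring

theorem suffixProd_modEq_iff (hA : EndSeq n l A) (hl : ∀ t ∈ l, IsAffRefl n t) {i : ℕ}
    (hi : i ≤ l.length) {c : ℤ} :
    suffixProd l i c ≡ A i [ZMOD n] ↔ c ≡ A l.length [ZMOD n] := by
  rw [← hA.suffixProd_apply_last hl hi]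
  exact listProd_modEq_iff fun t ht => hl t (List.mem_of_mem_drop ht)

theorem suffixProd_apply (hA : EndSeq n l A) (hl : ∀ t ∈ l, IsAffRefl n t) {i : ℕ}
    (hi : i < l.length) {c : ℤ} (hc : ¬ c ≡ A l.length [ZMOD n]) :
    suffixProd l i c = suffixProd l (i + 1) c +
      if suffixProd l (i + 1) c ≡ A i [ZMOD n] then A (i + 1) - A i else 0 := by
  have hright : ¬ suffixProd l (i + 1) c ≡ A (i + 1) [ZMOD n] :=
    mt (hA.suffixProd_modEq_iff hl hi).1 hc
  rw [suffixProd_eq_comp l hi, comp_apply, ← List.get_eq_getElem (i := ⟨i, hi⟩), (hA i hi).2]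
  split_ifs with hleft
  · rw [affRefl_apply_of_modEq_left hleft]; ring
  · rw [affRefl_apply_of_not_modEq hleft hright, add_zero]

theorem suffixProd_lt_iff (hA : EndSeq n l A) (hl : ∀ t ∈ l, IsAffRefl n t) {i : ℕ}
    (hi : i < l.length) {c : ℤ} (hc : ¬ c ≡ A l.length [ZMOD n]) :
    suffixProd l (i + 1) c < suffixProd l i c ↔ suffixProd l (i + 1) c ≡ A i [ZMOD n] := by
  rw [hA.suffixProd_apply hl hi hc]
  have := (hA i hi).1
  split_ifs with h <;> simp only [h, iff_true, iff_false] <;> linarith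

theorem sum_filter_modEq (hA : EndSeq n l A) (hl : ∀ t ∈ l, IsAffRefl n t) {c : ℤ}
    (hc : ¬ c ≡ A l.length [ZMOD n]) :
    ∑ i ∈ range l.length with suffixProd l (i + 1) c ≡ A i [ZMOD n], (A (i + 1) - A i) =
      listProd l c - c := by
  rw [sum_filter]
  calc _ = ∑ i ∈ range l.length, (suffixProd l i c - suffixProd l (i + 1) c) :=
        sum_congr rfl fun i hi => by
          rw [hA.suffixProd_apply hl (mem_range.1 hi) hc]
          split_ifs <;> ring
    _ = listProd l c - c := by
        rw [sum_range_sub', suffixProd_zero, suffixProd_length, id]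

/-- `λₙ (A l.length) = A 0 ≤ A l.length`, whereas `λₙ` moves every nonzero class up. -/
theorem last_modEq_zero (hA : EndSeq n l A) (hl : ∀ t ∈ l, IsAffRefl n t) (hn : 0 < n)
    (hprod : listProd l = lam n) : A l.length ≡ 0 [ZMOD n] := by
  by_contra hc
  have h := hA.suffixProd_apply_last hl (Nat.zero_le _)
  rw [suffixProd_zero, hprod, lam_apply_of_not_modEq_zero hc] at h
  have : (0 : ℤ) < n := by exact_mod_cast hn
  linarith [hA.apply_zero_le_s4]

theorem two_le_card_filter_modEq (hA : EndSeq n l A) (hl : ∀ t ∈ l, IsAffRefl n t)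
    (hn : 0 < n) (hprod : listProd l = lam n) {c : ℤ} (hc : ¬ c ≡ 0 [ZMOD n]) :
    2 ≤ #{i ∈ range l.length | suffixProd l (i + 1) c ≡ A i [ZMOD n]} := by
  have hc' : ¬ c ≡ A l.length [ZMOD n] := fun h =>
    hc (h.trans (hA.last_modEq_zero hl hn hprod))
  refine two_le_card_of_sum_eq_of_not_dvd (d := fun i => A (i + 1) - A i) (m := n) (by omega)
    (fun i hi => ?_) ?_
  · rw [← Int.modEq_iff_dvd]
    exact hA.not_modEq_succ hl (mem_range.1 (mem_filter.1 hi).1)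
  · rw [hA.sum_filter_modEq hl hc', hprod, lam_apply_of_not_modEq_zero hc]
    ring

theorem card_filter_Ico_modEq (hA : EndSeq n l A) (hl : ∀ t ∈ l, IsAffRefl n t) (hn : 0 < n)
    (hAm : A l.length ≡ 0 [ZMOD n]) {i : ℕ} (hi : i < l.length) :
    #{c ∈ Ico 1 (n : ℤ) | suffixProd l (i + 1) c ≡ A i [ZMOD n]} = 1 := by
  have hL : ∀ t ∈ l.drop (i + 1), IsAffRefl n t := fun t ht => hl t (List.mem_of_mem_drop ht)
  refine card_filter_Ico_modEq_eq_one hn (fun y z => listProd_modEq_iff hL)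
    (listProd_surjective hL) fun h => hA.not_modEq_succ hl hi ?_
  rw [← hA.suffixProd_apply_last hl hi]
  exact h.symm.trans (listProd_modEq hL hAm.symm)

theorem sum_card_filter_modEq (hA : EndSeq n l A) (hl : ∀ t ∈ l, IsAffRefl n t) (hn : 0 < n)
    (hAm : A l.length ≡ 0 [ZMOD n]) :
    ∑ c ∈ Ico 1 (n : ℤ), #{i ∈ range l.length | suffixProd l (i + 1) c ≡ A i [ZMOD n]} =
      l.length := by
  refine (sum_card_bipartiteAbove_eq_sum_card_bipartiteBelow
    (fun c i => suffixProd l (i + 1) c ≡ A i [ZMOD n])).trans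
    ((sum_congr rfl fun i hi => hA.card_filter_Ico_modEq hl hn hAm (mem_range.1 hi)).trans ?_)
  simp

end EndSeq

end

/-- In a tree-like factorization of `λₙ`, for each `k ∈ {1, …, n-1}`
there are exactly two indices `ℓ` such that `r_ℓ` increases `k`, i.e. such that
`r_ℓ r_{ℓ+1} ⋯ r_{2n-2}(k) > r_{ℓ+1} ⋯ r_{2n-2}(k)`. -/
theorem stmt4 (n : ℕ) (hn : 2 ≤ n) (l : List (ℤ → ℤ)) (h : IsTreeLike n l)
    (k : ℤ) (hk1 : 1 ≤ k) (hk2 : k ≤ (n : ℤ) - 1) :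
    ((Finset.range l.length).filter
      (fun i => suffixProd l (i + 1) k < suffixProd l i k)).card = 2 := by
  obtain ⟨A, hA⟩ := h.exists_endSeq
  obtain ⟨⟨hl, hprod⟩, hlen, -⟩ := h
  have hn0 : 0 < n := by omega
  have hAm := hA.last_modEq_zero hl hn0 hprod
  have hk : k ∈ Ico 1 (n : ℤ) := mem_Ico.2 ⟨hk1, by omega⟩
  have hT : ∀ c ∈ Ico 1 (n : ℤ),
      2 = #{i ∈ range l.length | suffixProd l (i + 1) c ≡ A i [ZMOD n]} := by
    refine (sum_eq_sum_iff_of_le fun c hc =>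
      hA.two_le_card_filter_modEq hl hn0 hprod (not_modEq_zero_of_mem_Ico hc)).1 ?_
    rw [hA.sum_card_filter_modEq hl hn0 hAm, sum_const, Int.card_Ico, smul_eq_mul, hlen]
    omega
  refine (congrArg card (filter_congr fun i hi => ?_)).trans (hT k hk).symm
  exact hA.suffixProd_lt_iff hl (mem_range.1 hi) fun h =>
    not_modEq_zero_of_mem_Ico hk (h.trans hAm)
end
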